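/- Let f, g, h ∈ ℤ[z] be nonconstant with f = g·h, f = a_0 + a_1 z + ... + a_m z^m, g having constant term b_0 and h constant term c_0. Suppose there exist a prime p and positive integers k ≥ 2 and j with 1 ≤ j ≤ m such that p^k divides gcd(a_0, a_1, ..., a_{j-1}), p^{k+1} does not divide a_0, and gcd(k, j) = 1. If p divides b_0 and p divides c_0, then p divides a_j. -/

import Mathlib

/-!
Give the `u`-th monomial of a polynomial over `ℤ` the weight `j * v_p(coeff u) + k * u`, i.e.
measure the height of the point `(u, v_p(coeff u))` of its Newton diagram above the line through
`(0, k)` and `(j, 0)`. In a product, the leftmost monomials of least weight of the two factors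
multiply to a monomial whose coefficient is not cancelled modulo a higher power of `p` (a weighted
Gauss lemma), so the least weights add up. The hypotheses on the `a i` say that the least weight
of `f` is `j * k = j * v_p(b₀) + j * v_p(c₀)`, which forces the constant terms of `g` and `h` to be
of least weight. A term `b_u c_l` of `a_j` with `u, l > 0` and `p ∤ b_u c_l` would then give
`k * u = j * v_p(b₀)` with `0 < u < j`, impossible as `gcd(k, j) = 1`.
-/

open Polynomial Finset

lemma Nat.Coprime.mul_ne_mul_of_pos_of_lt {k j u : ℕ} (hcop : k.Coprime j) (hu : 0 < u)
    (huj : u < j) (A : ℕ) : k * u ≠ j * A := by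
  intro h
  have hdvd : j ∣ u := hcop.symm.dvd_of_dvd_mul_left ⟨A, h⟩
  exact absurd (Nat.le_of_dvd hu hdvd) (by omega)

lemma pow_dvd_mul_iff_le_padicValInt_add {p : ℕ} [Fact p.Prime] {b c : ℤ} (hb : b ≠ 0) (hc : c ≠ 0)
    (n : ℕ) : (p : ℤ) ^ n ∣ b * c ↔ n ≤ padicValInt p b + padicValInt p c := by
  rw [padicValInt_dvd_iff, padicValInt.mul hb hc]
  simp [hb, hc]

namespace Polynomial

def newtonWeight (p α β : ℕ) (f : ℤ[X]) (u : ℕ) : ℕ :=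
  α * padicValInt p (f.coeff u) + β * u

variable {p : ℕ} (α β : ℕ)

lemma exists_newtonWeight_min {f : ℤ[X]} (hf : f ≠ 0) :
    ∃ u, f.coeff u ≠ 0 ∧
      (∀ u', f.coeff u' ≠ 0 → newtonWeight p α β f u ≤ newtonWeight p α β f u') ∧
      ∀ u' < u, f.coeff u' ≠ 0 → newtonWeight p α β f u < newtonWeight p α β f u' := by
  obtain ⟨u, hu, hmin⟩ := f.support.exists_min_image
    (fun u => toLex (newtonWeight p α β f u, u)) (nonempty_support_iff.2 hf)
  refine ⟨u, mem_support_iff.1 hu, fun u' hu' => ?_, fun u' hlt hu' => ?_⟩ <;>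
  · have h := hmin u' (mem_support_iff.2 hu')
    rw [Prod.Lex.toLex_le_toLex] at h
    omega

variable [Fact p.Prime]

theorem exists_newtonWeight_mul_le {g h : ℤ[X]} (hg : g ≠ 0) (hh : h ≠ 0) :
    ∃ u l, (∀ u', g.coeff u' ≠ 0 → newtonWeight p α β g u ≤ newtonWeight p α β g u') ∧
      (∀ l', h.coeff l' ≠ 0 → newtonWeight p α β h l ≤ newtonWeight p α β h l') ∧
      (g * h).coeff (u + l) ≠ 0 ∧
      newtonWeight p α β (g * h) (u + l) ≤ newtonWeight p α β g u + newtonWeight p α β h l := by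
  obtain ⟨u, hu0, hu, hu_lt⟩ := exists_newtonWeight_min (p := p) α β hg
  obtain ⟨l, hl0, hl, hl_lt⟩ := exists_newtonWeight_min (p := p) α β hh
  set d := padicValInt p (g.coeff u) + padicValInt p (h.coeff l) with hd
  have hterm : ¬ (p : ℤ) ^ (d + 1) ∣ g.coeff u * h.coeff l := by
    simp [pow_dvd_mul_iff_le_padicValInt_add hu0 hl0, hd]
  have hrest : ∀ q ∈ (antidiagonal (u + l)).erase (u, l),
      (p : ℤ) ^ (d + 1) ∣ g.coeff q.1 * h.coeff q.2 := by
    rintro ⟨u', l'⟩ hq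
    rw [mem_erase, HasAntidiagonal.mem_antidiagonal, Ne, Prod.mk.injEq] at hq
    by_cases hu' : g.coeff u' = 0
    · simp [hu']
    by_cases hl' : h.coeff l' = 0
    · simp [hl']
    -- `u' < u` or `l' < l`, and the tie-break in the choice of `u` and `l` makes that strict
    have hlt : newtonWeight p α β g u + newtonWeight p α β h l <
        newtonWeight p α β g u' + newtonWeight p α β h l' := by
      have := hu u' hu'
      have := hl l' hl'
      rcases lt_or_ge u' u with h1 | h1
      · have := hu_lt u' h1 hu'
        omega
      · have := hl_lt l' (by omega) hl'
        omega
    have hβ : β * u' + β * l' = β * u + β * l := by rw [← mul_add, ← mul_add, hq.2]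
    simp only [newtonWeight] at hlt
    rw [pow_dvd_mul_iff_le_padicValInt_add hu' hl']
    exact Nat.lt_of_mul_lt_mul_left (a := α) (by rw [hd, mul_add, mul_add]; linarith)
  have hcoeff : ¬ (p : ℤ) ^ (d + 1) ∣ (g * h).coeff (u + l) := by
    have hmem : (u, l) ∈ antidiagonal (u + l) := HasAntidiagonal.mem_antidiagonal.2 rfl
    rwa [coeff_mul, ← add_sum_erase _ _ hmem, dvd_add_left (dvd_sum hrest)]
  have hne : (g * h).coeff (u + l) ≠ 0 := fun h0 => hcoeff (h0 ▸ dvd_zero _)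
  refine ⟨u, l, hu, hl, hne, ?_⟩
  have hv : padicValInt p ((g * h).coeff (u + l)) ≤ d := by
    by_contra! hv
    exact hcoeff ((padicValInt_dvd_iff _ _).2 (Or.inr hv))
  simp only [newtonWeight]
  nlinarith [Nat.mul_le_mul_left α hv]

lemma le_newtonWeight_of_pow_dvd {f : ℤ[X]} {j k : ℕ} (hdvd : ∀ t < j, (p : ℤ) ^ k ∣ f.coeff t)
    {t : ℕ} (ht : f.coeff t ≠ 0) : j * k ≤ newtonWeight p j k f t := by
  unfold newtonWeight
  rcases lt_or_ge t j with htj | htj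
  · have hk := ((padicValInt_dvd_iff k _).1 (hdvd t htj)).resolve_left ht
    nlinarith [Nat.mul_le_mul_left j hk]
  · nlinarith [Nat.mul_le_mul_left k htj]

theorem prime_dvd_coeff_mul_coeff {g h : ℤ[X]} {j k u l : ℕ} (hcop : k.Coprime j)
    (hb0 : (p : ℤ) ∣ g.coeff 0) (hc0 : (p : ℤ) ∣ h.coeff 0)
    (hk : padicValInt p (g.coeff 0) + padicValInt p (h.coeff 0) = k)
    (hg : ∀ u, g.coeff u ≠ 0 → newtonWeight p j k g 0 ≤ newtonWeight p j k g u)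
    (hh : ∀ l, h.coeff l ≠ 0 → newtonWeight p j k h 0 ≤ newtonWeight p j k h l)
    (hul : u + l = j) : (p : ℤ) ∣ g.coeff u * h.coeff l := by
  rw [(Nat.prime_iff_prime_int.mp Fact.out).dvd_mul]
  by_contra! ⟨hbu, hcl⟩
  have hu : u ≠ 0 := by rintro rfl; exact hbu hb0
  have hl : l ≠ 0 := by rintro rfl; exact hcl hc0
  have hgu := hg u fun h0 => hbu (h0 ▸ dvd_zero _)
  have hhl := hh l fun h0 => hcl (h0 ▸ dvd_zero _)
  simp only [newtonWeight, padicValInt.eq_zero_of_not_dvd hbu, padicValInt.eq_zero_of_not_dvd hcl,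
    mul_zero, zero_add] at hgu hhl
  refine hcop.mul_ne_mul_of_pos_of_lt (Nat.pos_of_ne_zero hu) (by omega)
    (padicValInt p (g.coeff 0)) ?_
  have hj : j * (padicValInt p (g.coeff 0) + padicValInt p (h.coeff 0)) = k * u + k * l := by
    rw [hk, ← mul_add, hul, mul_comm]
  rw [mul_add] at hj
  linarith

end Polynomial

theorem stmt17_general (m : ℕ) (a : ℕ → ℤ) (f g h : ℤ[X])
    (hf : f = ∑ i ∈ range (m + 1), C (a i) * X ^ i)
    (hfac : f = g * h)
    (p : ℕ) (hp : p.Prime) (k j : ℕ) (hj1 : 1 ≤ j) (hjm : j ≤ m)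
    (hdvd : ∀ i < j, (p : ℤ) ^ k ∣ a i)
    (hndvd0 : ¬ (p : ℤ) ^ (k + 1) ∣ a 0)
    (hcop : Nat.Coprime k j)
    (hb0 : (p : ℤ) ∣ g.coeff 0) (hc0 : (p : ℤ) ∣ h.coeff 0) :
    (p : ℤ) ∣ a j := by
  have := Fact.mk hp
  have hfa : ∀ t ≤ m, f.coeff t = a t := fun t ht => by
    simp [hf, finsetSum_coeff, Nat.lt_succ_iff.2 ht]
  have ha0 : g.coeff 0 * h.coeff 0 = a 0 := by rw [← mul_coeff_zero, ← hfac, hfa 0 (Nat.zero_le m)]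
  have ha0ne : a 0 ≠ 0 := fun h0 => hndvd0 (h0 ▸ dvd_zero _)
  have hb0ne : g.coeff 0 ≠ 0 := left_ne_zero_of_mul (ha0 ▸ ha0ne)
  have hc0ne : h.coeff 0 ≠ 0 := right_ne_zero_of_mul (ha0 ▸ ha0ne)
  have hg : g ≠ 0 := by rintro rfl; simp at hb0ne
  have hh : h ≠ 0 := by rintro rfl; simp at hc0ne
  have hvk : padicValInt p (g.coeff 0) + padicValInt p (h.coeff 0) = k := by
    rw [← padicValInt.mul hb0ne hc0ne, ha0]
    have h1 := ((padicValInt_dvd_iff k (a 0)).1 (hdvd 0 hj1)).resolve_left ha0ne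
    have h2 := mt ((padicValInt_dvd_iff (k + 1) (a 0)).2 ∘ Or.inr) hndvd0
    omega
  obtain ⟨u, l, hu, hl, hne, hle⟩ := exists_newtonWeight_mul_le (p := p) j k hg hh
  have hf_min := le_newtonWeight_of_pow_dvd (f := g * h)
    (fun t ht => hfac ▸ hfa t (ht.le.trans hjm) ▸ hdvd t ht) hne
  have h0 : newtonWeight p j k g 0 + newtonWeight p j k h 0 = j * k := by
    simp [newtonWeight, ← mul_add, hvk]
  have hgu := hu 0 hb0ne
  have hhl := hl 0 hc0ne
  have hg_min : ∀ u', g.coeff u' ≠ 0 → newtonWeight p j k g 0 ≤ newtonWeight p j k g u' :=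
    fun u' hu' => by have := hu u' hu'; omega
  have hh_min : ∀ l', h.coeff l' ≠ 0 → newtonWeight p j k h 0 ≤ newtonWeight p j k h l' :=
    fun l' hl' => by have := hl l' hl'; omega
  rw [← hfa j hjm, hfac, coeff_mul]
  exact dvd_sum fun q hq => prime_dvd_coeff_mul_coeff hcop hb0 hc0 hvk hg_min hh_min
    (HasAntidiagonal.mem_antidiagonal.1 hq)

/-- Lemma A (Singh–Kumar): if `p` divides both constant terms of the factors,
then `p` divides `a j`. -/
theorem stmt17 (m : ℕ) (a : ℕ → ℤ) (f g h : ℤ[X])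
    (hf : f = ∑ i ∈ range (m + 1), C (a i) * X ^ i)
    (hgnc : 0 < g.natDegree) (hhnc : 0 < h.natDegree)
    (hfac : f = g * h)
    (p : ℕ) (hp : p.Prime) (k j : ℕ) (hk : 2 ≤ k) (hj1 : 1 ≤ j) (hjm : j ≤ m)
    (hdvd : ∀ i < j, (p : ℤ) ^ k ∣ a i)
    (hndvd0 : ¬ (p : ℤ) ^ (k + 1) ∣ a 0)
    (hcop : Nat.Coprime k j)
    (hb0 : (p : ℤ) ∣ g.coeff 0) (hc0 : (p : ℤ) ∣ h.coeff 0) :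
    (p : ℤ) ∣ a j :=
  stmt17_general m a f g h hf hfac p hp k j hj1 hjm hdvd hndvd0 hcop hb0 hc0
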